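/- (Worst-case braking collision.) Let a > 0, s > 0, P₀, p₀ ∈ ℝ and speeds v₀ > v̂₀ ≥ 0. If both vehicles brake simultaneously with deceleration a from time 0 and the initial gap satisfies P₀ − p₀ < s + (v₀² − v̂₀²)/(2a), then there exists t ≥ 0 (e.g. t = v₀/a) with pos(P₀, v̂₀, t) − pos(p₀, v₀, t) < s, i.e. a collision occurs in the worst case scenario. -/
import Mathlib

/-- Braked trajectory: a vehicle with initial position `p` and initial speed `v ≥ 0`
braking at constant deceleration `a > 0` until it stops. -/
noncomputable def pos (a p v t : ℝ) : ℝ :=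
  if t ≤ v / a then p + v * t - (a/2) * t^2 else p + v^2 / (2*a)

/-- Worst-case braking collision: if the follower is strictly faster than the leader
and the initial gap is below `s + (v₀² − v̂₀²)/(2a)`, then when both vehicles brake
simultaneously with deceleration `a` a collision occurs at some time `t ≥ 0`. -/
theorem worst_case_braking_collision (a s P0 p0 vhat0 v0 : ℝ)
    (ha : 0 < a) (hs : 0 < s) (hvhat : 0 ≤ vhat0) (hvv : vhat0 < v0)
    (hgap : P0 - p0 < s + (v0^2 - vhat0^2) / (2*a)) :
    ∃ t ≥ (0:ℝ), pos a P0 vhat0 t - pos a p0 v0 t < s := by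
  have hv0 : 0 < v0 := lt_of_le_of_lt hvhat hvv
  refine ⟨v0 / a, by positivity, ?_⟩
  have h1 : ¬ (v0 / a ≤ vhat0 / a) := by
    rw [not_le]
    gcongr
  unfold pos
  rw [if_neg h1, if_pos le_rfl]
  have ha' : a ≠ 0 := ne_of_gt ha
  have key : v0 * (v0 / a) - a / 2 * (v0 / a) ^ 2 = v0 ^ 2 / (2 * a) := by
    field_simp; ring
  have key2 : (v0 ^ 2 - vhat0 ^ 2) / (2 * a) = v0 ^ 2 / (2 * a) - vhat0 ^ 2 / (2 * a) := by
    ring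
  linarith [hgap, key, key2]
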